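/- For every λ > 0 and every symmetric 2×2 matrix ξ, one has g_λ(ξ) ≥ 2|ξ|_∞, where |ξ|_∞ = max(|τ₁(ξ)|, |τ₂(ξ)|) is the operator norm. -/

import Mathlib

open Matrix

/-- Eigenvalue τ₁ of a symmetric 2×2 real matrix (larger root). -/
noncomputable def tau1 (ξ : Matrix (Fin 2) (Fin 2) ℝ) : ℝ :=
  ((ξ 0 0 + ξ 1 1) + Real.sqrt ((ξ 0 0 - ξ 1 1) ^ 2 + 4 * (ξ 0 1) ^ 2)) / 2

/-- Eigenvalue τ₂ of a symmetric 2×2 real matrix (smaller root). -/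
noncomputable def tau2 (ξ : Matrix (Fin 2) (Fin 2) ℝ) : ℝ :=
  ((ξ 0 0 + ξ 1 1) - Real.sqrt ((ξ 0 0 - ξ 1 1) ^ 2 + 4 * (ξ 0 1) ^ 2)) / 2

/-- ρ⁰(ξ) = |τ₁(ξ)| + |τ₂(ξ)|. -/
noncomputable def rho0 (ξ : Matrix (Fin 2) (Fin 2) ℝ) : ℝ := |tau1 ξ| + |tau2 ξ|

/-- Frobenius norm of a 2×2 matrix. -/
noncomputable def frob (ξ : Matrix (Fin 2) (Fin 2) ℝ) : ℝ :=
  Real.sqrt (∑ i, ∑ j, (ξ i j) ^ 2)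

/-- The function g_λ. -/
noncomputable def gl (l : ℝ) (ξ : Matrix (Fin 2) (Fin 2) ℝ) : ℝ :=
  if rho0 ξ ≤ Real.sqrt l then 2 * (rho0 ξ - |ξ.det| / Real.sqrt l)
  else (frob ξ) ^ 2 / Real.sqrt l + Real.sqrt l

/-- Operator norm |ξ|_∞ = max(|τ₁|,|τ₂|). -/
noncomputable def opn (ξ : Matrix (Fin 2) (Fin 2) ℝ) : ℝ := max |tau1 ξ| |tau2 ξ|

/-! For symmetric `ξ` one has `det ξ = τ₁ τ₂` and `|ξ|² = τ₁² + τ₂²`, so with `s = √λ` both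
branches of `g_λ` become inequalities between reals. Below the threshold, `|τ₁| ≤ s` gives
`|τ₁ τ₂| / s ≤ |τ₂|` and symmetrically, so subtracting `|τ₁ τ₂| / s` from `|τ₁| + |τ₂|` still
leaves the larger of the two. Above it, AM-GM `x² / s + s ≥ 2x` with `x = |ξ|_∞ ≤ |ξ|`. -/

section RealInequalities

variable {a b s : ℝ}

theorem abs_mul_div_le_abs_right (hs : 0 < s) (ha : |a| ≤ s) : |a * b| / s ≤ |b| := by
  rw [div_le_iff₀ hs, abs_mul, mul_comm]
  exact mul_le_mul_of_nonneg_left ha (abs_nonneg b)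

theorem max_abs_le_abs_add_abs_sub_abs_mul_div (hs : 0 < s) (h : |a| + |b| ≤ s) :
    max |a| |b| ≤ |a| + |b| - |a * b| / s := by
  have ha : |a| ≤ s := by linarith [abs_nonneg b]
  have hb : |b| ≤ s := by linarith [abs_nonneg a]
  have hab : |a * b| / s ≤ |b| := abs_mul_div_le_abs_right hs ha
  have hba : |a * b| / s ≤ |a| := by
    rw [mul_comm]; exact abs_mul_div_le_abs_right hs hb
  rcases max_cases |a| |b| with ⟨h, -⟩ | ⟨h, -⟩ <;> rw [h] <;> linarith

theorem two_mul_le_sq_div_add (hs : 0 < s) (x : ℝ) : 2 * x ≤ x ^ 2 / s + s := by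
  rw [div_add' _ _ _ hs.ne', le_div_iff₀ hs]
  nlinarith [sq_nonneg (x - s)]

theorem two_mul_max_abs_le_sq_add_sq_div_add (hs : 0 < s) :
    2 * max |a| |b| ≤ (a ^ 2 + b ^ 2) / s + s := by
  have hmax : max |a| |b| ^ 2 ≤ a ^ 2 + b ^ 2 := by
    rcases max_cases |a| |b| with ⟨h, -⟩ | ⟨h, -⟩ <;> rw [h, sq_abs] <;> nlinarith
  calc 2 * max |a| |b| ≤ max |a| |b| ^ 2 / s + s := two_mul_le_sq_div_add hs _
    _ ≤ (a ^ 2 + b ^ 2) / s + s := by gcongr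

end RealInequalities

section SymmetricEigenvalues

theorem sq_sqrt_discr (ξ : Matrix (Fin 2) (Fin 2) ℝ) :
    Real.sqrt ((ξ 0 0 - ξ 1 1) ^ 2 + 4 * ξ 0 1 ^ 2) ^ 2 = (ξ 0 0 - ξ 1 1) ^ 2 + 4 * ξ 0 1 ^ 2 :=
  Real.sq_sqrt (by positivity)

variable {ξ : Matrix (Fin 2) (Fin 2) ℝ}

theorem tau1_mul_tau2 (hξ : ξ.IsSymm) : tau1 ξ * tau2 ξ = ξ.det := by
  rw [Matrix.det_fin_two, hξ.apply 0 1, tau1, tau2]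
  linear_combination (-1 / 4 : ℝ) * sq_sqrt_discr ξ

theorem frob_sq (hξ : ξ.IsSymm) : frob ξ ^ 2 = tau1 ξ ^ 2 + tau2 ξ ^ 2 := by
  rw [frob, Real.sq_sqrt (by positivity)]
  simp only [Fin.sum_univ_two]
  rw [hξ.apply 0 1, tau1, tau2]
  linear_combination (-1 / 2 : ℝ) * sq_sqrt_discr ξ

end SymmetricEigenvalues

theorem stmt6 (l : ℝ) (hl : 0 < l) (ξ : Matrix (Fin 2) (Fin 2) ℝ) (hξ : ξ.IsSymm) :
    2 * opn ξ ≤ gl l ξ := by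
  have hs : 0 < Real.sqrt l := Real.sqrt_pos.mpr hl
  unfold gl opn
  split_ifs with h
  · rw [← tau1_mul_tau2 hξ]
    have hmax := max_abs_le_abs_add_abs_sub_abs_mul_div hs h
    rw [rho0]
    linarith
  · rw [frob_sq hξ]
    exact two_mul_max_abs_le_sq_add_sq_div_add hs
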